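/- Let c_0 ∈ X_{0,1}^+, assume the rate coefficients satisfy the growth condition (GB), and let c = (c_i)_{i≥0} be an admissible mild solution of the isolated DGED system with initial datum c_0. Then for all t ≥ 0, ∑_{i=0}^∞ c_i(t) = ∑_{i=0}^∞ c_{0i} and ∑_{i=0}^∞ i c_i(t) = ∑_{i=0}^∞ i c_{0i}. -/

import Mathlib

open Finset MeasureTheory

/-- Infinite-system operator `Q_{1,i}`. -/
noncomputable def Qi1 (a : ℕ → ℕ → ℕ → ℝ) (c : ℕ → ℝ) (i : ℕ) : ℝ :=
  ∑' p : ℕ × ℕ, if 1 ≤ p.1 then a (i + p.1) p.2 p.1 * c (i + p.1) * c p.2 else 0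

/-- Infinite-system operator `Q_{2,i}`. -/
noncomputable def Qi2 (a : ℕ → ℕ → ℕ → ℝ) (c : ℕ → ℝ) (i : ℕ) : ℝ :=
  -∑' p : ℕ × ℕ, if 1 ≤ p.1 ∧ p.1 ≤ p.2 then a p.2 i p.1 * c p.2 * c i else 0

/-- Infinite-system operator `Q_{3,i}` (equal to `0` when `i = 0`). -/
noncomputable def Qi3 (a : ℕ → ℕ → ℕ → ℝ) (c : ℕ → ℝ) (i : ℕ) : ℝ :=
  ∑ k ∈ Finset.Icc 1 i, ∑' j : ℕ, if k ≤ j then a j (i - k) k * c j * c (i - k) else 0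

/-- Infinite-system operator `Q_{4,i}` (equal to `0` when `i = 0`). -/
noncomputable def Qi4 (a : ℕ → ℕ → ℕ → ℝ) (c : ℕ → ℝ) (i : ℕ) : ℝ :=
  -∑ k ∈ Finset.Icc 1 i, ∑' j : ℕ, a i j k * c j * c i

/-- Summability of all the series defining the operators `Q_{j,i}`. -/
def QSummable (a : ℕ → ℕ → ℕ → ℝ) (c : ℕ → ℝ) (i : ℕ) : Prop :=
  Summable (fun p : ℕ × ℕ =>
    if 1 ≤ p.1 then a (i + p.1) p.2 p.1 * c (i + p.1) * c p.2 else 0) ∧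
  Summable (fun p : ℕ × ℕ =>
    if 1 ≤ p.1 ∧ p.1 ≤ p.2 then a p.2 i p.1 * c p.2 * c i else 0) ∧
  (∀ k ∈ Finset.Icc 1 i,
    Summable (fun j : ℕ => if k ≤ j then a j (i - k) k * c j * c (i - k) else 0)) ∧
  (∀ k ∈ Finset.Icc 1 i, Summable (fun j : ℕ => a i j k * c j * c i))

/-- `c` is a mild solution of the isolated DGED system on the set `S` with
initial datum `c0 ∈ X_{0,1}^+`. -/
def MildSolIso (a : ℕ → ℕ → ℕ → ℝ) (c0 : ℕ → ℝ) (S : Set ℝ) (c : ℕ → ℝ → ℝ) : Prop :=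
  (∀ i, c i 0 = c0 i) ∧
  (∀ t ∈ S, (∀ i, 0 ≤ c i t) ∧ Summable (fun i : ℕ => (1 + (i : ℝ)) * c i t)) ∧
  (∀ i, ContinuousOn (c i) S) ∧
  (∀ i : ℕ, ∀ t ∈ S,
    (∀ᵐ s ∂(volume.restrict (Set.Ioc 0 t)), QSummable a (fun n => c n s) i) ∧
    IntegrableOn (fun s => Qi1 a (fun n => c n s) i) (Set.Ioc 0 t) ∧
    IntegrableOn (fun s => Qi2 a (fun n => c n s) i) (Set.Ioc 0 t) ∧
    IntegrableOn (fun s => Qi3 a (fun n => c n s) i) (Set.Ioc 0 t) ∧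
    IntegrableOn (fun s => Qi4 a (fun n => c n s) i) (Set.Ioc 0 t) ∧
    c i t = c0 i + ∫ s in (0 : ℝ)..t,
      (Qi1 a (fun n => c n s) i + Qi2 a (fun n => c n s) i +
        Qi3 a (fun n => c n s) i + Qi4 a (fun n => c n s) i))

/-- `c` is a mild solution of the non-isolated DGED system on the set `S` with
initial datum `c0 ∈ X_{0,1}^+`: the concentration of `0`-clusters is constant and the
components `c_i`, `i ≥ 1`, satisfy the integral equations. -/
def MildSolNon (a : ℕ → ℕ → ℕ → ℝ) (c0 : ℕ → ℝ) (S : Set ℝ) (c : ℕ → ℝ → ℝ) : Prop :=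
  (∀ i, c i 0 = c0 i) ∧
  (∀ t ∈ S, (∀ i, 0 ≤ c i t) ∧ Summable (fun i : ℕ => (1 + (i : ℝ)) * c i t)) ∧
  (∀ i, ContinuousOn (c i) S) ∧
  (∀ t ∈ S, c 0 t = c0 0) ∧
  (∀ i : ℕ, 1 ≤ i → ∀ t ∈ S,
    (∀ᵐ s ∂(volume.restrict (Set.Ioc 0 t)), QSummable a (fun n => c n s) i) ∧
    IntegrableOn (fun s => Qi1 a (fun n => c n s) i) (Set.Ioc 0 t) ∧
    IntegrableOn (fun s => Qi2 a (fun n => c n s) i) (Set.Ioc 0 t) ∧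
    IntegrableOn (fun s => Qi3 a (fun n => c n s) i) (Set.Ioc 0 t) ∧
    IntegrableOn (fun s => Qi4 a (fun n => c n s) i) (Set.Ioc 0 t) ∧
    c i t = c0 i + ∫ s in (0 : ℝ)..t,
      (Qi1 a (fun n => c n s) i + Qi2 a (fun n => c n s) i +
        Qi3 a (fun n => c n s) i + Qi4 a (fun n => c n s) i))

/-- Growth condition (GB) on the rate coefficients. -/
def GB (a : ℕ → ℕ → ℕ → ℝ) (C Q : ℝ) (q : ℕ → ℕ → ℝ) : Prop :=
  1 ≤ C ∧ 1 ≤ Q ∧ (∀ i k, 0 ≤ q i k) ∧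
  (∀ i : ℕ, 1 ≤ i →
    ∑ k ∈ Finset.Icc 1 i, (k : ℝ) * ((i : ℝ) - k + 1) * q i k ≤ Q * i) ∧
  (∀ i j k : ℕ, 1 ≤ k → k ≤ i → 1 ≤ j →
    a i j k ≤ C * ((i : ℝ) - k + 1) * ((j : ℝ) + k) * q i k)

open Finset

/-- Truncated operator `Q^N_{1,i}`. -/
noncomputable def QN1 (a : ℕ → ℕ → ℕ → ℝ) (N : ℕ) (c : ℕ → ℝ) (i : ℕ) : ℝ :=
  ∑ k ∈ Finset.Icc 1 (N - i), ∑ j ∈ Finset.Icc 0 (N - k), a (i + k) j k * c (i + k) * c j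

/-- Truncated operator `Q^N_{2,i}`. -/
noncomputable def QN2 (a : ℕ → ℕ → ℕ → ℝ) (N : ℕ) (c : ℕ → ℝ) (i : ℕ) : ℝ :=
  -∑ k ∈ Finset.Icc 1 (N - i), ∑ j ∈ Finset.Icc k N, a j i k * c j * c i

/-- Truncated operator `Q^N_{3,i}`. -/
noncomputable def QN3 (a : ℕ → ℕ → ℕ → ℝ) (N : ℕ) (c : ℕ → ℝ) (i : ℕ) : ℝ :=
  ∑ k ∈ Finset.Icc 1 i, ∑ j ∈ Finset.Icc k N, a j (i - k) k * c j * c (i - k)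

/-- Truncated operator `Q^N_{4,i}`. -/
noncomputable def QN4 (a : ℕ → ℕ → ℕ → ℝ) (N : ℕ) (c : ℕ → ℝ) (i : ℕ) : ℝ :=
  -∑ k ∈ Finset.Icc 1 i, ∑ j ∈ Finset.Icc 0 (N - k), a i j k * c j * c i

/-- `c` is a solution of the `N`-truncated isolated DGED system on the set `I`. -/
def IsTruncSolIso (a : ℕ → ℕ → ℕ → ℝ) (N : ℕ) (I : Set ℝ) (c : ℕ → ℝ → ℝ) : Prop :=
  ∀ t ∈ I,
    HasDerivAt (c 0) (QN1 a N (fun n => c n t) 0 + QN2 a N (fun n => c n t) 0) t ∧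
    (∀ i, 1 ≤ i → i ≤ N - 1 →
      HasDerivAt (c i)
        (QN1 a N (fun n => c n t) i + QN2 a N (fun n => c n t) i +
          QN3 a N (fun n => c n t) i + QN4 a N (fun n => c n t) i) t) ∧
    HasDerivAt (c N) (QN3 a N (fun n => c n t) N + QN4 a N (fun n => c n t) N) t


/-- Admissibility: `c` is a pointwise limit of nonnegative solutions of truncated
isolated systems with the same initial data (extended by zero above the truncation). -/
def AdmissibleIso (a : ℕ → ℕ → ℕ → ℝ) (c0 : ℕ → ℝ) (c : ℕ → ℝ → ℝ) : Prop :=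
  ∃ (Nm : ℕ → ℕ) (cN : ℕ → ℕ → ℝ → ℝ), StrictMono Nm ∧
    (∀ m, 2 ≤ Nm m) ∧
    (∀ m, IsTruncSolIso a (Nm m) (Set.Ici 0) (cN m)) ∧
    (∀ m, ∀ i, i ≤ Nm m → cN m i 0 = c0 i) ∧
    (∀ m, ∀ i, Nm m < i → ∀ t : ℝ, cN m i t = 0) ∧
    (∀ m, ∀ i, i ≤ Nm m → ∀ t : ℝ, 0 ≤ t → 0 ≤ cN m i t) ∧
    (∀ i : ℕ, ∀ t : ℝ, 0 ≤ t →
      Filter.Tendsto (fun m => cN m i t) Filter.atTop (nhds (c i t)))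

/-!
Each exchange event turns a pair of clusters of sizes `(p, j)` into `(p - k, j + k)`, so the
truncated systems conserve the number `∑ cᵢ` and the mass `∑ i cᵢ` exactly, and passing to the
limit only requires the tails `∑_{i > R} cᵢᴺ(t)` and `∑_{i > R} i cᵢᴺ(t)` to be small uniformly
in `N`. For the number this follows from the conserved mass. For the mass we use the moment
`∑ g_R(i) cᵢ`, where `g_R(x) = x²` for `x ≤ R`, continued linearly beyond `R`: superadditivity of
`g_R` and (GB) give `d/dt ∑ g_R(i) cᵢ ≤ 8 C Q M ∑ g_R(i) cᵢ` with `M` the initial mass, so by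
Grönwall the moment stays below `e^{8CQMt} ∑ g_R(i) c₀ᵢ`. This bound is `o(R)` by dominated
convergence, while the moment dominates `R ∑_{i > R} i cᵢ`.
-/

open Filter Topology

/-- Twice the Huber function with threshold `R`. -/
noncomputable def huber (R x : ℝ) : ℝ := if x ≤ R then x ^ 2 else R * (2 * x - R)

section Huber

variable {R x y : ℝ}

lemma huber_nonneg (hR : 0 ≤ R) (hx : 0 ≤ x) : 0 ≤ huber R x := by
  unfold huber; split_ifs <;> nlinarith

lemma huber_zero (hR : 0 ≤ R) : huber R 0 = 0 := by simp [huber, hR]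

lemma mul_min_le_huber (hR : 0 ≤ R) : x * min R x ≤ huber R x := by
  unfold huber; split_ifs with h
  · rw [min_eq_right h]; nlinarith
  · rw [min_eq_left (not_le.mp h).le]; nlinarith [not_le.mp h]

lemma huber_le_mul (hR : 0 ≤ R) (hx : 0 ≤ x) : huber R x ≤ 2 * R * x := by
  unfold huber; split_ifs <;> nlinarith

lemma huber_add_le (hR : 0 ≤ R) (hx : 0 ≤ x) (hy : 0 ≤ y) :
    huber R x + huber R y ≤ huber R (x + y) := by
  unfold huber; split_ifs <;>
    nlinarith [mul_nonneg hx hy, sq_nonneg (x + y - R), sq_nonneg (R - x), sq_nonneg (R - y)]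

lemma huber_add_sub_le (hR : 0 ≤ R) (hx : 0 ≤ x) (hy : 0 ≤ y) :
    huber R (x + y) - huber R x - huber R y ≤ 2 * y * min R x := by
  rcases le_total R x with h | h
  · rw [min_eq_left h]; unfold huber; split_ifs <;> nlinarith
  · rw [min_eq_right h]; unfold huber; split_ifs <;> nlinarith [sq_nonneg (x + y - R)]

lemma huber_exchange_le {k p j : ℝ} (hR : 0 ≤ R) (hk : 0 ≤ k) (hkp : k ≤ p) (hj : 0 ≤ j) :
    (huber R (p - k) + huber R (j + k) - huber R p - huber R j) * (j + k)
      ≤ 4 * k * j * (min R j + min R p) := by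
  -- superadditivity bounds the increment by its value `W` at `p = k`, which is symmetric in `j, k`
  set W := huber R (j + k) - huber R j - huber R k
  have hΔ : huber R (p - k) + huber R (j + k) - huber R p - huber R j ≤ W := by
    have := huber_add_le hR (sub_nonneg.mpr hkp) hk
    rw [sub_add_cancel] at this
    linarith
  have hWj : W ≤ 2 * k * min R j := huber_add_sub_le hR hj hk
  have hWk : W ≤ 2 * j * min R p := by
    have := huber_add_sub_le hR hk hj
    rw [add_comm k j] at this
    nlinarith [min_le_min_left R hkp]
  have hminj : 0 ≤ min R j := le_min hR hj
  have hminp : 0 ≤ min R p := le_min hR (hk.trans hkp)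
  calc _ ≤ W * (j + k) := mul_le_mul_of_nonneg_right hΔ (by linarith)
    _ ≤ _ := by
      rcases le_or_gt W 0 with hW | hW
      · nlinarith [mul_nonneg (mul_nonneg hk hj) (add_nonneg hminj hminp)]
      · rcases le_total k j with h | h <;> nlinarith

lemma sum_mul_min_le_sum_huber {R : ℝ} (hR : 0 ≤ R) {c : ℕ → ℝ} (hc : ∀ i, 0 ≤ c i)
    (s : Finset ℕ) : ∑ i ∈ s, (i : ℝ) * min R i * c i ≤ ∑ i ∈ s, huber R i * c i :=
  sum_le_sum fun i _ => mul_le_mul_of_nonneg_right (mul_min_le_huber hR) (hc i)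

lemma summable_huber_mul {f : ℕ → ℝ} (hf : ∀ i, 0 ≤ f i)
    (hsum : Summable fun i : ℕ => (i : ℝ) * f i) {R : ℝ} (hR : 0 ≤ R) :
    Summable fun i : ℕ => huber R i * f i :=
  (hsum.mul_left (2 * R)).of_nonneg_of_le
    (fun i => mul_nonneg (huber_nonneg hR i.cast_nonneg) (hf i))
    fun i => by
      rw [← mul_assoc]
      exact mul_le_mul_of_nonneg_right (huber_le_mul hR i.cast_nonneg) (hf i)

lemma tendsto_tsum_huber_mul_div {f : ℕ → ℝ} (hf : ∀ i, 0 ≤ f i)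
    (hsum : Summable fun i : ℕ => (i : ℝ) * f i) :
    Tendsto (fun R : ℕ => (∑' i : ℕ, huber R i * f i) / R) atTop (𝓝 0) := by
  simp only [← tsum_div_const]
  refine (tendsto_tsum_of_dominated_convergence (g := fun _ => 0)
    (bound := fun i : ℕ => 2 * ((i : ℝ) * f i)) (hsum.mul_left 2) (fun i => ?_) ?_).trans (by simp)
  · refine (tendsto_const_div_atTop_nhds_zero_nat ((i : ℝ) ^ 2 * f i)).congr' ?_
    filter_upwards [eventually_ge_atTop i] with R hR
    rw [huber, if_pos (by exact_mod_cast hR)]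
  · filter_upwards [eventually_gt_atTop 0] with R hR i
    have hR' : (0 : ℝ) < R := by exact_mod_cast hR
    rw [Real.norm_of_nonneg (div_nonneg (mul_nonneg (huber_nonneg hR'.le i.cast_nonneg) (hf i))
      hR'.le), div_le_iff₀ hR']
    nlinarith [huber_le_mul hR'.le i.cast_nonneg, hf i]

end Huber

/-- In an event of rate `a p j k` a `p`-cluster passes `k` units to a `j`-cluster; the bracket is
the resulting change of the observable `∑ w i c i`. -/
noncomputable def truncFlux (a : ℕ → ℕ → ℕ → ℝ) (N : ℕ) (w c : ℕ → ℝ) : ℝ :=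
  ∑ k ∈ Icc 1 N, ∑ p ∈ Icc k N, ∑ j ∈ Icc 0 (N - k),
    a p j k * c p * c j * (w (p - k) + w (j + k) - w p - w j)

section WeakForm

variable {M : Type*} [AddCommMonoid M] (a : ℕ → ℕ → ℕ → ℝ) (N : ℕ) (w c : ℕ → ℝ)

lemma sum_range_sum_Icc_sub_comm (f : ℕ → ℕ → M) :
    ∑ i ∈ range (N + 1), ∑ k ∈ Icc 1 (N - i), f i k
      = ∑ k ∈ Icc 1 N, ∑ i ∈ Icc 0 (N - k), f i k :=
  sum_comm' (by intro i k; simp only [mem_range, mem_Icc]; omega)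

lemma sum_range_sum_Icc_comm (f : ℕ → ℕ → M) :
    ∑ i ∈ range (N + 1), ∑ k ∈ Icc 1 i, f i k = ∑ k ∈ Icc 1 N, ∑ i ∈ Icc k N, f i k :=
  sum_comm' (by intro i k; simp only [mem_range, mem_Icc]; omega)

lemma sum_Icc_eq_sum_Icc_add {k : ℕ} (hk : k ≤ N) (f : ℕ → M) :
    ∑ p ∈ Icc k N, f p = ∑ i ∈ Icc 0 (N - k), f (k + i) := by
  have hmap : Icc k N = (Icc 0 (N - k)).map (addLeftEmbedding k) := by
    rw [map_add_left_Icc]; congr 1; omega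
  rw [hmap, sum_map]
  rfl

lemma sum_mul_QN1 : ∑ i ∈ range (N + 1), w i * QN1 a N c i
    = ∑ k ∈ Icc 1 N, ∑ p ∈ Icc k N, ∑ j ∈ Icc 0 (N - k), a p j k * c p * c j * w (p - k) := by
  simp only [QN1, mul_sum]
  rw [sum_range_sum_Icc_sub_comm]
  refine sum_congr rfl fun k hk => ?_
  rw [sum_Icc_eq_sum_Icc_add N (mem_Icc.mp hk).2]
  refine sum_congr rfl fun i _ => sum_congr rfl fun j _ => ?_
  rw [Nat.add_sub_cancel_left, Nat.add_comm k i]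
  ring

lemma sum_mul_QN2 : ∑ i ∈ range (N + 1), w i * QN2 a N c i
    = -∑ k ∈ Icc 1 N, ∑ p ∈ Icc k N, ∑ j ∈ Icc 0 (N - k), a p j k * c p * c j * w j := by
  simp only [QN2, mul_neg, mul_sum, sum_neg_distrib]
  rw [sum_range_sum_Icc_sub_comm]
  refine congrArg _ (sum_congr rfl fun k _ => ?_)
  rw [sum_comm]
  exact sum_congr rfl fun p _ => sum_congr rfl fun j _ => by ring

lemma sum_mul_QN3 : ∑ i ∈ range (N + 1), w i * QN3 a N c i
    = ∑ k ∈ Icc 1 N, ∑ p ∈ Icc k N, ∑ j ∈ Icc 0 (N - k), a p j k * c p * c j * w (j + k) := by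
  simp only [QN3, mul_sum]
  rw [sum_range_sum_Icc_comm]
  refine sum_congr rfl fun k hk => ?_
  rw [sum_Icc_eq_sum_Icc_add N (mem_Icc.mp hk).2, sum_comm]
  refine sum_congr rfl fun p _ => sum_congr rfl fun j _ => ?_
  rw [Nat.add_sub_cancel_left, Nat.add_comm k j]
  ring

lemma sum_mul_QN4 : ∑ i ∈ range (N + 1), w i * QN4 a N c i
    = -∑ k ∈ Icc 1 N, ∑ p ∈ Icc k N, ∑ j ∈ Icc 0 (N - k), a p j k * c p * c j * w p := by
  simp only [QN4, mul_neg, mul_sum, sum_neg_distrib]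
  rw [sum_range_sum_Icc_comm]
  exact congrArg _ (sum_congr rfl fun k _ => sum_congr rfl fun p _ =>
    sum_congr rfl fun j _ => by ring)

lemma sum_mul_QN_eq_truncFlux :
    ∑ i ∈ range (N + 1), w i * (QN1 a N c i + QN2 a N c i + QN3 a N c i + QN4 a N c i)
      = truncFlux a N w c := by
  simp only [mul_add]
  rw [sum_add_distrib, sum_add_distrib, sum_add_distrib, sum_mul_QN1, sum_mul_QN2, sum_mul_QN3,
    sum_mul_QN4, truncFlux]
  simp only [← sum_neg_distrib, ← sum_add_distrib]
  exact sum_congr rfl fun k _ => sum_congr rfl fun p _ => sum_congr rfl fun j _ => by ring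

end WeakForm

namespace IsTruncSolIso

variable {a : ℕ → ℕ → ℕ → ℝ} {N : ℕ} {c : ℕ → ℝ → ℝ} {t : ℝ}

lemma hasDerivAt (h : IsTruncSolIso a N (Set.Ici 0) c) (ht : 0 ≤ t) {i : ℕ} (hi : i ≤ N) :
    HasDerivAt (c i)
      (QN1 a N (fun n => c n t) i + QN2 a N (fun n => c n t) i +
        QN3 a N (fun n => c n t) i + QN4 a N (fun n => c n t) i) t := by
  obtain ⟨h0, hmid, htop⟩ := h t ht
  rcases Nat.eq_zero_or_pos i with rfl | hi0
  · simpa [QN3, QN4] using h0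
  rcases hi.lt_or_eq with hiN | rfl
  · exact hmid i hi0 (by omega)
  · simpa [QN1, QN2] using htop

lemma hasDerivAt_sum_mul (h : IsTruncSolIso a N (Set.Ici 0) c) (w : ℕ → ℝ) (ht : 0 ≤ t) :
    HasDerivAt (fun s => ∑ i ∈ range (N + 1), w i * c i s)
      (truncFlux a N w (fun n => c n t)) t := by
  rw [← sum_mul_QN_eq_truncFlux]
  exact HasDerivAt.fun_sum fun i hi =>
    (h.hasDerivAt ht (Nat.lt_succ_iff.mp (mem_range.mp hi))).const_mul (w i)

lemma sum_mul_le_mul_exp (h : IsTruncSolIso a N (Set.Ici 0) c) {w : ℕ → ℝ} {K : ℝ}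
    (hw : ∀ s, 0 ≤ s →
      truncFlux a N w (fun n => c n s) ≤ K * ∑ i ∈ range (N + 1), w i * c i s)
    (ht : 0 ≤ t) :
    ∑ i ∈ range (N + 1), w i * c i t ≤ (∑ i ∈ range (N + 1), w i * c i 0) * Real.exp (K * t) := by
  have hder := fun s (hs : s ∈ Set.Icc 0 t) => h.hasDerivAt_sum_mul w hs.1
  have := le_gronwallBound_of_liminf_deriv_right_le (ε := 0)
    (fun s hs => (hder s hs).continuousAt.continuousWithinAt)
    (fun s hs r hr =>
      (hder s (Set.Ico_subset_Icc_self hs)).hasDerivWithinAt.liminf_right_slope_le hr)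
    le_rfl (fun s hs => by simpa using hw s hs.1) t ⟨ht, le_rfl⟩
  rwa [sub_zero, gronwallBound_ε0] at this

end IsTruncSolIso

section GrowthBound

variable {a : ℕ → ℕ → ℕ → ℝ} {C Q : ℝ} {q : ℕ → ℕ → ℝ}

lemma GB.sum_le (hGB : GB a C Q q) (p : ℕ) :
    ∑ k ∈ Icc 1 p, (k : ℝ) * ((p : ℝ) - k + 1) * q p k ≤ Q * p := by
  rcases Nat.eq_zero_or_pos p with rfl | hp
  · simp
  · exact hGB.2.2.2.1 p hp

lemma flux_huber_term_le (ha : ∀ i j k, 0 ≤ a i j k) (hGB : GB a C Q q) {R : ℝ} (hR : 0 ≤ R)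
    {c : ℕ → ℝ} (hc : ∀ i, 0 ≤ c i) {k p j : ℕ} (hk : 1 ≤ k) (hkp : k ≤ p) :
    a p j k * c p * c j *
        (huber R ((p - k : ℕ) : ℝ) + huber R ((j + k : ℕ) : ℝ) - huber R p - huber R j)
      ≤ (k * ((p : ℝ) - k + 1) * q p k) * (4 * C * c p) * (j * (min R j + min R p) * c j) := by
  have hkp' : (k : ℝ) ≤ p := by exact_mod_cast hkp
  have hC : 0 ≤ C := by linarith [hGB.1]
  have hpk : (0 : ℝ) ≤ (p : ℝ) - k + 1 := by linarith
  have hq := hGB.2.2.1 p k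
  have hcp := hc p
  have hcj := hc j
  push_cast [Nat.cast_sub hkp]
  set Δ := huber R (p - k) + huber R (j + k) - huber R p - huber R j
  have hrhs : 0 ≤ (k * ((p : ℝ) - k + 1) * q p k) * (4 * C * c p) *
      (j * (min R j + min R p) * c j) := by
    have : 0 ≤ min R (j : ℝ) := le_min hR j.cast_nonneg
    have : 0 ≤ min R (p : ℝ) := le_min hR p.cast_nonneg
    positivity
  by_cases hneg : Δ ≤ 0
  · have hlhs : 0 ≤ a p j k * c p * c j := by have := ha p j k; positivity
    exact (mul_nonpos_of_nonneg_of_nonpos hlhs hneg).trans hrhs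
  have hj : 1 ≤ j := by
    refine Nat.one_le_iff_ne_zero.mpr fun hj => hneg ?_
    -- (GB) says nothing about `j = 0`, but then superadditivity of `huber` forces `Δ ≤ 0`
    have := huber_add_le hR (sub_nonneg.mpr hkp') k.cast_nonneg
    simp only [Δ, hj, Nat.cast_zero, zero_add, huber_zero hR, sub_add_cancel] at this ⊢
    linarith
  have hcoef : 0 ≤ C * ((p : ℝ) - k + 1) * q p k * (c p * c j) := by positivity
  calc a p j k * c p * c j * Δ
      ≤ (C * ((p : ℝ) - k + 1) * ((j : ℝ) + k) * q p k) * c p * c j * Δ := by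
        gcongr
        · exact (not_le.mp hneg).le
        · exact hGB.2.2.2.2 p j k hk hkp hj
    _ = C * ((p : ℝ) - k + 1) * q p k * (c p * c j) * (Δ * (j + k)) := by ring
    _ ≤ C * ((p : ℝ) - k + 1) * q p k * (c p * c j) * (4 * k * j * (min R j + min R p)) :=
        mul_le_mul_of_nonneg_left
          (huber_exchange_le hR k.cast_nonneg hkp' j.cast_nonneg) hcoef
    _ = _ := by ring

lemma truncFlux_huber_le_sum (ha : ∀ i j k, 0 ≤ a i j k) (hGB : GB a C Q q) {R : ℝ} (hR : 0 ≤ R)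
    {c : ℕ → ℝ} (hc : ∀ i, 0 ≤ c i) (N : ℕ) :
    truncFlux a N (fun n => huber R n) c
      ≤ ∑ p ∈ range (N + 1), (∑ k ∈ Icc 1 p, (k : ℝ) * ((p : ℝ) - k + 1) * q p k) *
          (4 * C * c p) * ∑ j ∈ range (N + 1), j * (min R j + min R p) * c j := by
  set T : ℕ → ℕ → ℕ → ℝ := fun k p j =>
    (k * ((p : ℝ) - k + 1) * q p k) * (4 * C * c p) * (j * (min R j + min R p) * c j)
  have hT : ∀ k p j, k ≤ p → 0 ≤ T k p j := fun k p j hkp => by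
    have : (k : ℝ) ≤ p := by exact_mod_cast hkp
    have : (0 : ℝ) ≤ p - k + 1 := by linarith
    have : 0 ≤ C := by linarith [hGB.1]
    have := hGB.2.2.1 p k; have := hc p; have := hc j
    have := le_min hR j.cast_nonneg; have := le_min hR p.cast_nonneg
    positivity
  calc truncFlux a N (fun n => huber R n) c
      ≤ ∑ k ∈ Icc 1 N, ∑ p ∈ Icc k N, ∑ j ∈ range (N + 1), T k p j := by
        refine sum_le_sum fun k hk => sum_le_sum fun p hp => ?_
        obtain ⟨hk1, -⟩ := mem_Icc.mp hk
        obtain ⟨hkp, -⟩ := mem_Icc.mp hp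
        refine (sum_le_sum fun j _ => flux_huber_term_le ha hGB hR hc hk1 hkp).trans ?_
        exact sum_le_sum_of_subset_of_nonneg
          (fun j hj => by simp only [mem_range, mem_Icc] at hj ⊢; omega) fun j _ _ => hT k p j hkp
    _ = _ := by
        rw [← sum_range_sum_Icc_comm]
        simp only [T, ← mul_sum, sum_mul]

lemma truncFlux_huber_le (ha : ∀ i j k, 0 ≤ a i j k) (hGB : GB a C Q q) {R : ℝ} (hR : 0 ≤ R)
    {c : ℕ → ℝ} (hc : ∀ i, 0 ≤ c i) (N : ℕ) :
    truncFlux a N (fun n => huber R n) c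
      ≤ 8 * C * Q * (∑ i ∈ range (N + 1), (i : ℝ) * c i) *
          ∑ i ∈ range (N + 1), huber R i * c i := by
  set M := ∑ i ∈ range (N + 1), (i : ℝ) * c i with hM_def
  set F := ∑ i ∈ range (N + 1), huber R i * c i
  have hC : 0 ≤ C := by linarith [hGB.1]
  have hQ : 0 ≤ Q := by linarith [hGB.2.1]
  have hM : 0 ≤ M := sum_nonneg fun i _ => mul_nonneg i.cast_nonneg (hc i)
  have hmin : ∀ i : ℕ, 0 ≤ min R i := fun i => le_min hR i.cast_nonneg
  have hS : ∀ p : ℕ, ∑ j ∈ range (N + 1), j * (min R j + min R p) * c j ≤ F + M * min R p := by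
    intro p
    calc ∑ j ∈ range (N + 1), j * (min R j + min R p) * c j
        = ∑ j ∈ range (N + 1), (j : ℝ) * min R j * c j + M * min R p := by
          rw [hM_def, sum_mul, ← sum_add_distrib]
          exact sum_congr rfl fun j _ => by ring
      _ ≤ F + M * min R p := by
          gcongr
          exact sum_mul_min_le_sum_huber hR hc _
  calc truncFlux a N (fun n => huber R n) c
      ≤ ∑ p ∈ range (N + 1), (∑ k ∈ Icc 1 p, (k : ℝ) * ((p : ℝ) - k + 1) * q p k) *
          (4 * C * c p) * ∑ j ∈ range (N + 1), j * (min R j + min R p) * c j :=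
        truncFlux_huber_le_sum ha hGB hR hc N
    _ ≤ ∑ p ∈ range (N + 1), Q * p * (4 * C * c p) * (F + M * min R p) := by
        refine sum_le_sum fun p _ => ?_
        have := hc p
        refine mul_le_mul (mul_le_mul_of_nonneg_right (GB.sum_le hGB p) (by positivity)) (hS p)
          (sum_nonneg fun j _ => ?_) (by positivity)
        have := hc j; have := hmin j; have := hmin p
        positivity
    _ = 4 * C * Q * F * (∑ p ∈ range (N + 1), (p : ℝ) * c p) +
          4 * C * Q * M * ∑ p ∈ range (N + 1), p * min R p * c p := by
        rw [mul_sum _ _ (4 * C * Q * F), mul_sum _ _ (4 * C * Q * M), ← sum_add_distrib]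
        exact sum_congr rfl fun p _ => by ring
    _ ≤ 8 * C * Q * M * F := by
        rw [← hM_def]
        have := mul_le_mul_of_nonneg_left (sum_mul_min_le_sum_huber hR hc (range (N + 1))) hM
        nlinarith [mul_nonneg hC hQ]

end GrowthBound

lemma sum_Ico_le_div_of_mul_le {f g : ℕ → ℝ} {r B : ℝ} {R N : ℕ} (hr : 0 < r)
    (hg : ∀ i, 0 ≤ g i) (hfg : ∀ i, R < i → r * f i ≤ g i)
    (hB : ∑ i ∈ range (N + 1), g i ≤ B) :
    ∑ i ∈ Ico (R + 1) (N + 1), f i ≤ B / r := by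
  rw [le_div_iff₀ hr, sum_mul]
  calc ∑ i ∈ Ico (R + 1) (N + 1), f i * r
      ≤ ∑ i ∈ Ico (R + 1) (N + 1), g i :=
        sum_le_sum fun i hi => by linarith [hfg i (mem_Ico.mp hi).1]
    _ ≤ ∑ i ∈ range (N + 1), g i :=
        sum_le_sum_of_subset_of_nonneg
          (fun i hi => by simp only [mem_range, mem_Ico] at hi ⊢; omega) fun i _ _ => hg i
    _ ≤ B := hB

lemma tsum_eq_tsum_of_tendsto_of_tail_le {S : ℕ → ℕ → ℝ} {N : ℕ → ℕ} {f g δ : ℕ → ℝ}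
    (hS : ∀ m i, 0 ≤ S m i) (hN : Tendsto N atTop atTop)
    (hlim : ∀ i, Tendsto (fun m => S m i) atTop (𝓝 (f i))) (hf : Summable f) (hg : Summable g)
    (hcons : ∀ m, ∑ i ∈ range (N m + 1), S m i = ∑ i ∈ range (N m + 1), g i)
    (hδ : Tendsto δ atTop (𝓝 0))
    (htail : ∀ᶠ R in atTop, ∀ m, R ≤ N m → ∑ i ∈ Ico (R + 1) (N m + 1), S m i ≤ δ R) :
    ∑' i, f i = ∑' i, g i := by
  have hgap : ∀ R, (∀ m, R ≤ N m → ∑ i ∈ Ico (R + 1) (N m + 1), S m i ≤ δ R) →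
      0 ≤ ∑' i, g i - ∑ i ∈ range (R + 1), f i ∧
        ∑' i, g i - ∑ i ∈ range (R + 1), f i ≤ δ R := by
    intro R hR
    have hlim_gap : Tendsto (fun m => ∑ i ∈ range (N m + 1), g i - ∑ i ∈ range (R + 1), S m i)
        atTop (𝓝 (∑' i, g i - ∑ i ∈ range (R + 1), f i)) :=
      ((hg.hasSum.tendsto_sum_nat.comp (tendsto_add_atTop_nat 1)).comp hN).sub
        (tendsto_finsetSum _ fun i _ => hlim i)
    have hgap_eq : ∀ᶠ m in atTop, ∑ i ∈ range (N m + 1), g i - ∑ i ∈ range (R + 1), S m i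
        = ∑ i ∈ Ico (R + 1) (N m + 1), S m i := by
      filter_upwards [hN.eventually_ge_atTop R] with m hm
      rw [← hcons, ← sum_range_add_sum_Ico _ (by omega : R + 1 ≤ N m + 1), add_sub_cancel_left]
    constructor
    · refine ge_of_tendsto hlim_gap (hgap_eq.mono fun m hm => ?_)
      rw [hm]
      exact sum_nonneg fun i _ => hS m i
    · refine le_of_tendsto hlim_gap ?_
      filter_upwards [hgap_eq, hN.eventually_ge_atTop R] with m hm hRm
      exact hm ▸ hR m hRm
  have hto : Tendsto (fun R => ∑' i, g i - ∑ i ∈ range (R + 1), f i) atTop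
      (𝓝 (∑' i, g i - ∑' i, f i)) :=
    tendsto_const_nhds.sub (hf.hasSum.tendsto_sum_nat.comp (tendsto_add_atTop_nat 1))
  have hto0 : Tendsto (fun R => ∑' i, g i - ∑ i ∈ range (R + 1), f i) atTop (𝓝 0) :=
    squeeze_zero' (htail.mono fun R hR => (hgap R hR).1) (htail.mono fun R hR => (hgap R hR).2) hδ
  linarith [tendsto_nhds_unique hto hto0]

namespace IsTruncSolIso

variable {a : ℕ → ℕ → ℕ → ℝ} {N : ℕ} {c : ℕ → ℝ → ℝ} {c0 : ℕ → ℝ} {t : ℝ}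

lemma sum_mul_eq_initial (h : IsTruncSolIso a N (Set.Ici 0) c) (hinit : ∀ i ≤ N, c i 0 = c0 i)
    {w : ℕ → ℝ} (hw : ∀ k p j : ℕ, k ≤ p → w (p - k) + w (j + k) - w p - w j = 0) (ht : 0 ≤ t) :
    ∑ i ∈ range (N + 1), w i * c i t = ∑ i ∈ range (N + 1), w i * c0 i := by
  have hder : ∀ s ∈ Set.Icc 0 t, HasDerivAt (fun s => ∑ i ∈ range (N + 1), w i * c i s) 0 s := by
    intro s hs
    convert h.hasDerivAt_sum_mul w hs.1 using 1
    refine (sum_eq_zero fun k _ => sum_eq_zero fun p hp => sum_eq_zero fun j _ => ?_).symm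
    rw [hw k p j (mem_Icc.mp hp).1, mul_zero]
  rw [constant_of_has_deriv_right_zero
    (fun s hs => (hder s hs).continuousAt.continuousWithinAt)
    (fun s hs => (hder s (Set.Ico_subset_Icc_self hs)).hasDerivWithinAt) t ⟨ht, le_rfl⟩]
  exact sum_congr rfl fun i hi => by rw [hinit i (Nat.lt_succ_iff.mp (mem_range.mp hi))]

lemma sum_eq_initial (h : IsTruncSolIso a N (Set.Ici 0) c) (hinit : ∀ i ≤ N, c i 0 = c0 i)
    (ht : 0 ≤ t) : ∑ i ∈ range (N + 1), c i t = ∑ i ∈ range (N + 1), c0 i := by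
  simpa using h.sum_mul_eq_initial hinit (w := fun _ => 1) (by simp) ht

lemma sum_mass_eq_initial (h : IsTruncSolIso a N (Set.Ici 0) c) (hinit : ∀ i ≤ N, c i 0 = c0 i)
    (ht : 0 ≤ t) : ∑ i ∈ range (N + 1), (i : ℝ) * c i t = ∑ i ∈ range (N + 1), (i : ℝ) * c0 i :=
  h.sum_mul_eq_initial hinit (fun k p j hkp => by push_cast [Nat.cast_sub hkp]; ring) ht

lemma sum_mass_le_tsum (h : IsTruncSolIso a N (Set.Ici 0) c) (hinit : ∀ i ≤ N, c i 0 = c0 i)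
    (hc0 : ∀ i, 0 ≤ c0 i) (hsum : Summable fun i : ℕ => (i : ℝ) * c0 i) (ht : 0 ≤ t) :
    ∑ i ∈ range (N + 1), (i : ℝ) * c i t ≤ ∑' i : ℕ, (i : ℝ) * c0 i := by
  rw [h.sum_mass_eq_initial hinit ht]
  exact hsum.sum_le_tsum _ fun i _ => mul_nonneg i.cast_nonneg (hc0 i)

lemma tail_sum_le (h : IsTruncSolIso a N (Set.Ici 0) c) (hinit : ∀ i ≤ N, c i 0 = c0 i)
    (hnn : ∀ i, 0 ≤ c i t) (hc0 : ∀ i, 0 ≤ c0 i) (hsum : Summable fun i : ℕ => (i : ℝ) * c0 i)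
    (ht : 0 ≤ t) (R : ℕ) :
    ∑ i ∈ Ico (R + 1) (N + 1), c i t ≤ (∑' i : ℕ, (i : ℝ) * c0 i) / (R + 1) :=
  sum_Ico_le_div_of_mul_le (by positivity) (fun i => mul_nonneg i.cast_nonneg (hnn i))
    (fun i hi => mul_le_mul_of_nonneg_right (by exact_mod_cast hi) (hnn i))
    (h.sum_mass_le_tsum hinit hc0 hsum ht)

lemma tail_mass_le {C Q : ℝ} {q : ℕ → ℕ → ℝ} (ha : ∀ i j k, 0 ≤ a i j k) (hGB : GB a C Q q)
    (h : IsTruncSolIso a N (Set.Ici 0) c) (hinit : ∀ i ≤ N, c i 0 = c0 i)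
    (hnn : ∀ i s, 0 ≤ s → 0 ≤ c i s) (hc0 : ∀ i, 0 ≤ c0 i)
    (hsum : Summable fun i : ℕ => (i : ℝ) * c0 i) (ht : 0 ≤ t) {R : ℕ} (hR : 0 < R) :
    ∑ i ∈ Ico (R + 1) (N + 1), (i : ℝ) * c i t
      ≤ (∑' i : ℕ, huber R i * c0 i) *
          Real.exp (8 * C * Q * (∑' i : ℕ, (i : ℝ) * c0 i) * t) / R := by
  have hR0 : (0 : ℝ) ≤ R := R.cast_nonneg
  have hflux : ∀ s, 0 ≤ s → truncFlux a N (fun n => huber R n) (fun n => c n s)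
      ≤ 8 * C * Q * (∑' i : ℕ, (i : ℝ) * c0 i) * ∑ i ∈ range (N + 1), huber R i * c i s := by
    intro s hs
    have hF : 0 ≤ ∑ i ∈ range (N + 1), huber R i * c i s :=
      sum_nonneg fun i _ => mul_nonneg (huber_nonneg hR0 i.cast_nonneg) (hnn i s hs)
    have hCQ : 0 ≤ 8 * C * Q := by nlinarith [hGB.1, hGB.2.1]
    refine (truncFlux_huber_le ha hGB hR0 (fun i => hnn i s hs) N).trans ?_
    gcongr
    exact h.sum_mass_le_tsum hinit hc0 hsum hs
  have hinit_huber : ∑ i ∈ range (N + 1), huber R i * c i 0 ≤ ∑' i : ℕ, huber R i * c0 i := by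
    refine (sum_congr rfl fun i hi => by
      rw [hinit i (Nat.lt_succ_iff.mp (mem_range.mp hi))]).trans_le ?_
    exact (summable_huber_mul hc0 hsum hR0).sum_le_tsum _
      fun i _ => mul_nonneg (huber_nonneg hR0 i.cast_nonneg) (hc0 i)
  refine sum_Ico_le_div_of_mul_le (by exact_mod_cast hR)
    (fun i => mul_nonneg (huber_nonneg hR0 i.cast_nonneg) (hnn i t ht)) (fun i hi => ?_)
    ((h.sum_mul_le_mul_exp hflux ht).trans
      (mul_le_mul_of_nonneg_right hinit_huber (Real.exp_pos _).le))
  have hRi : (R : ℝ) ≤ i := by exact_mod_cast hi.le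
  have := mul_min_le_huber hR0 (x := i)
  rw [min_eq_left hRi] at this
  nlinarith [hnn i t ht]

end IsTruncSolIso

lemma Summable.of_one_add_mul {f : ℕ → ℝ} (hf : ∀ i, 0 ≤ f i)
    (h : Summable fun i : ℕ => (1 + (i : ℝ)) * f i) :
    Summable f ∧ Summable fun i : ℕ => (i : ℝ) * f i :=
  ⟨h.of_nonneg_of_le hf fun i => by nlinarith [hf i, i.cast_nonneg (α := ℝ)],
    h.of_nonneg_of_le (fun i => mul_nonneg i.cast_nonneg (hf i)) fun i => by nlinarith [hf i]⟩

theorem admissible_isolated_conservation_general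
    (a : ℕ → ℕ → ℕ → ℝ) (ha : ∀ i j k, 0 ≤ a i j k)
    (C Q : ℝ) (q : ℕ → ℕ → ℝ) (hGB : GB a C Q q)
    (c0 : ℕ → ℝ) (hc0 : ∀ i, 0 ≤ c0 i)
    (hX : Summable (fun i : ℕ => (1 + (i : ℝ)) * c0 i))
    (c : ℕ → ℝ → ℝ) (hc : MildSolIso a c0 (Set.Ici 0) c)
    (hadm : AdmissibleIso a c0 c) :
    ∀ t : ℝ, 0 ≤ t →
      (∑' i : ℕ, c i t) = (∑' i : ℕ, c0 i) ∧
      (∑' i : ℕ, (i : ℝ) * c i t) = (∑' i : ℕ, (i : ℝ) * c0 i) := by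
  obtain ⟨Nm, cN, hNm, -, hsol, hinit, hvanish, hnng, hlim⟩ := hadm
  intro t ht
  obtain ⟨hct, hXt⟩ := hc.2.1 t ht
  obtain ⟨hsum0, hmass0⟩ := Summable.of_one_add_mul hc0 hX
  obtain ⟨hsumt, hmasst⟩ := Summable.of_one_add_mul hct hXt
  have hnn : ∀ m i s, 0 ≤ s → 0 ≤ cN m i s := fun m i s hs =>
    (le_or_gt i (Nm m)).elim (hnng m i · s hs) fun hi => (hvanish m i hi s).ge
  constructor
  · refine tsum_eq_tsum_of_tendsto_of_tail_le (fun m i => hnn m i t ht) hNm.tendsto_atTop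
      (fun i => hlim i t ht) hsumt hsum0 (fun m => (hsol m).sum_eq_initial (hinit m) ht)
      ?_ (Eventually.of_forall fun R m _ =>
        (hsol m).tail_sum_le (hinit m) (hnn m · t ht) hc0 hmass0 ht R)
    simpa [Function.comp_def] using
      (tendsto_const_div_atTop_nhds_zero_nat (∑' i : ℕ, (i : ℝ) * c0 i)).comp
        (tendsto_add_atTop_nat 1)
  · refine tsum_eq_tsum_of_tendsto_of_tail_le
      (fun m i => mul_nonneg i.cast_nonneg (hnn m i t ht)) hNm.tendsto_atTop
      (fun i => (hlim i t ht).const_mul _) hmasst hmass0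
      (fun m => (hsol m).sum_mass_eq_initial (hinit m) ht) ?_
      ((eventually_gt_atTop 0).mono fun R hR m _ =>
        (hsol m).tail_mass_le ha hGB (hinit m) (hnn m) hc0 hmass0 ht hR)
    simpa [mul_div_right_comm] using (tendsto_tsum_huber_mul_div hc0 hmass0).mul_const
      (Real.exp (8 * C * Q * (∑' i : ℕ, (i : ℝ) * c0 i) * t))

/-- Theorem 5.2: admissible solutions of the isolated DGED system conserve the total
number of clusters and the total mass. -/
theorem admissible_isolated_conservation
    (a : ℕ → ℕ → ℕ → ℝ) (ha : ∀ i j k, 0 ≤ a i j k)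
    (hzero : ∀ p : ℕ, 1 ≤ p → a p 0 p = 0)
    (C Q : ℝ) (q : ℕ → ℕ → ℝ) (hGB : GB a C Q q)
    (c0 : ℕ → ℝ) (hc0 : ∀ i, 0 ≤ c0 i)
    (hX : Summable (fun i : ℕ => (1 + (i : ℝ)) * c0 i))
    (c : ℕ → ℝ → ℝ) (hc : MildSolIso a c0 (Set.Ici 0) c)
    (hadm : AdmissibleIso a c0 c) :
    ∀ t : ℝ, 0 ≤ t →
      (∑' i : ℕ, c i t) = (∑' i : ℕ, c0 i) ∧
      (∑' i : ℕ, (i : ℝ) * c i t) = (∑' i : ℕ, (i : ℝ) * c0 i) :=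
  admissible_isolated_conservation_general a ha C Q q hGB c0 hc0 hX c hc hadm
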